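/- arXiv:1510.03502 — 3 statements merged into one kernel-verified Lean document; each statement's English description precedes it below -/
import Mathlib

section
/- The expected number of d-tuples common to all members of a uniformly random multiset of m Orthogonal d-trials on [p]×[p^(d-1)] equals p^(d²) · binomial(p^(d(d-1)(p-1)) ((p^(d-1)-1)!)^(dp) + m - 1, m) / binomial(((p^(d-1))!)^(dp) + m - 1, m). -/
/-- Points of the `d`-dimensional parameter space on `n = p^d` values, each value
written as a pair in `[p] × [p^(d-1)]`. -/
abbrev OPoint (p d : ℕ) := Fin d → Fin p × Fin (p ^ (d - 1))

/-- An Orthogonal `d`-trial on `[p] × [p^(d-1)]`: a Latin Hypercube `d`-trial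
(each of the `d` coordinate projections of the multiset of `p^d` rows is a
permutation of the `p^d` values) such that every `(p_1,…,p_d) ∈ [p]^d` occurs
exactly once as the tuple of first components of a row. -/
def IsOrthTrial {p d : ℕ} (H : Sym (OPoint p d) (p ^ d)) : Prop :=
  (∀ i : Fin d, (H : Multiset (OPoint p d)).map (fun r => r i)
      = (Finset.univ : Finset (Fin p × Fin (p ^ (d - 1)))).val) ∧
  (H : Multiset (OPoint p d)).map (fun r => fun i => (r i).1)
      = (Finset.univ : Finset (Fin d → Fin p)).val

instance {p d : ℕ} : DecidablePred (IsOrthTrial (p := p) (d := d)) := fun H => by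
  unfold IsOrthTrial; infer_instance

/-- The finset of all Orthogonal `d`-trials on `[p] × [p^(d-1)]`. -/
def OrthTrial (p d : ℕ) : Finset (Sym (OPoint p d) (p ^ d)) :=
  Finset.univ.filter IsOrthTrial

/-- The type of Orthogonal `d`-trials on `[p] × [p^(d-1)]`. -/
abbrev OT (p d : ℕ) := {H : Sym (OPoint p d) (p ^ d) // IsOrthTrial H}

/-!
A trial is determined by the map sending each tuple of first components `f ∈ [p]^d` to the
second components of its row, and the Latin condition in coordinate `i` says that for every
`v ∈ [p]` this map, read in coordinate `i`, is a bijection from `{f | f i = v}` onto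
`[p^(d-1)]`. So trials are the same as `dp` independent bijections between sets of size
`p^(d-1)`, and a trial contains a fixed tuple `a` iff `d` of these bijections (one per
coordinate) take a prescribed value at a prescribed point. Exchanging the sum over multisets
with the sum over tuples, each tuple `a` contributes the number of `m`-multisets drawn from the
trials containing `a`, a multichoose coefficient that does not depend on `a`.
-/

open Finset Function

section General

variable {α β γ : Type*}

theorem Fintype.card_subtype_equiv_apply_eq [Fintype α] [Fintype β] [DecidableEq α]
    [DecidableEq β] (h : Fintype.card α = Fintype.card β) (x₀ : α) (y₀ : β) :
    Fintype.card {e : α ≃ β // e x₀ = y₀} = (Fintype.card α - 1).factorial := by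
  have e : {e : α ≃ β // e x₀ = y₀} ≃ ({x // x ≠ x₀} ≃ {y // y ≠ y₀}) :=
    (Equiv.subtypeEquiv ((Equiv.optionSubtypeNe x₀).equivCongr (Equiv.refl β)).symm
      fun _ => Iff.rfl).trans (Equiv.optionSubtype y₀)
  rw [Fintype.card_congr e, Fintype.card_equiv (Fintype.equivOfCardEq (by
    simp [Fintype.card_subtype_compl, h])), Fintype.card_subtype_compl, Fintype.card_subtype_eq]

theorem Fintype.card_subtype_apply_eq [Fintype α] [DecidableEq α] [Fintype β] [DecidableEq β]
    (i : α) (y : β) :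
    Fintype.card {f : α → β // f i = y} = Fintype.card β ^ (Fintype.card α - 1) := by
  rw [Fintype.card_subtype, ← Fintype.piFinset_univ, Fintype.card_filter_piFinset_const]
  simp

theorem Multiset.map_univ_val_eq_univ_val_iff [Fintype α] [Fintype β] {g : α → β} :
    univ.val.map g = univ.val ↔ Bijective g := by
  refine ⟨fun hg => ⟨fun x y hxy => ?_, fun y => ?_⟩,
    fun hg => Multiset.map_univ_val_equiv (Equiv.ofBijective g hg)⟩
  · have hnd : (univ.val.map g).Nodup := hg ▸ univ.nodup
    exact Multiset.inj_on_of_nodup_map hnd x (mem_univ x) y (mem_univ y) hxy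
  · obtain ⟨x, -, hx⟩ := Multiset.mem_map.mp (hg ▸ mem_univ y : y ∈ univ.val.map g)
    exact ⟨x, hx⟩

theorem Multiset.exists_eq_map_univ_val_of_map_eq [Fintype α] {π : β → α} {s : Multiset β}
    (hs : s.map π = univ.val) :
    ∃ g : α → β, (∀ a, π (g a) = a) ∧ s = univ.val.map g := by
  have hmem a : ∃ x ∈ s, π x = a := Multiset.mem_map.mp (hs ▸ mem_univ a)
  choose g hgs hπg using hmem
  refine ⟨g, hπg, ?_⟩
  have hinj := Multiset.inj_on_of_nodup_map (hs ▸ univ.nodup : (s.map π).Nodup)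
  calc s = s.map (g ∘ π) :=
        (Multiset.map_congr rfl fun x hx => hinj _ (hgs (π x)) _ hx (hπg (π x))).trans
          (Multiset.map_id s) |>.symm
    _ = univ.val.map g := by rw [← Multiset.map_map, hs]

theorem Sym.card_filter_forall_mem [Fintype α] [DecidableEq α] (s : Finset α) (m : ℕ) :
    #{M : Sym α m | ∀ x ∈ M, x ∈ s} = Nat.multichoose #s m := by
  have himage : ({M : Sym α m | ∀ x ∈ M, x ∈ s} : Finset _) =
      (univ : Finset (Sym s m)).image (Sym.map Subtype.val) := by
    ext M
    simp only [mem_filter, mem_univ, true_and, mem_image]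
    constructor
    · intro hM
      refine ⟨M.attach.map fun x => ⟨x.1, hM x.1 x.2⟩, ?_⟩
      rw [Sym.map_map]
      exact Sym.attach_map_coe M
    · rintro ⟨N, rfl⟩ x hx
      obtain ⟨y, -, rfl⟩ := Multiset.mem_map.mp hx
      exact y.2
  rw [himage, card_image_of_injective _ (Sym.map_injective Subtype.val_injective m), card_univ,
    Sym.card_sym_eq_multichoose, Fintype.card_coe]

end General

section Fiberwise

variable {α β γ : Type*}

def FiberwiseBijective (π : α → β) (h : α → γ) : Prop :=
  ∀ b, Bijective fun x : {x // π x = b} => h x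

instance [Fintype α] [Fintype β] [DecidableEq β] [DecidableEq γ] [Fintype γ] (π : α → β) :
    DecidablePred (FiberwiseBijective (γ := γ) π) := fun h => by
  unfold FiberwiseBijective; infer_instance

theorem bijective_prodMk_iff {π : α → β} {h : α → γ} :
    Bijective (fun x => (π x, h x)) ↔ FiberwiseBijective π h := by
  constructor
  · rintro ⟨hinj, hsurj⟩ b
    refine ⟨fun x y hxy => Subtype.ext (hinj (Prod.ext (x.2.trans y.2.symm) hxy)), fun c => ?_⟩
    obtain ⟨x, hx⟩ := hsurj (b, c)
    exact ⟨⟨x, congrArg Prod.fst hx⟩, congrArg Prod.snd hx⟩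
  · intro hfib
    refine ⟨fun x y hxy => ?_, fun ⟨b, c⟩ => ?_⟩
    · have hπ : π x = π y := congrArg Prod.fst hxy
      exact congrArg Subtype.val
        ((hfib (π y)).1 (a₁ := ⟨x, hπ⟩) (a₂ := ⟨y, rfl⟩) (congrArg Prod.snd hxy))
    · obtain ⟨⟨x, rfl⟩, hx⟩ := (hfib b).2 c
      exact ⟨x, Prod.ext rfl hx⟩

noncomputable def fiberwiseBijectiveEquiv (π : α → β) (γ : Type*) :
    {h : α → γ // FiberwiseBijective π h} ≃ ∀ b, ({x // π x = b} ≃ γ) where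
  toFun h b := Equiv.ofBijective _ (h.2 b)
  invFun e := ⟨fun x => e (π x) ⟨x, rfl⟩, fun b => by
    convert (e b).bijective using 1
    funext ⟨x, hx⟩
    subst hx
    rfl⟩
  left_inv _ := rfl
  right_inv e := by
    funext b
    refine Equiv.ext fun ⟨x, hx⟩ => ?_
    subst hx
    rfl

variable [Fintype α] [Fintype β] [Fintype γ] [DecidableEq α] [DecidableEq β] [DecidableEq γ]
  {π : α → β}

theorem card_fiberwiseBijective (hπ : ∀ b, Fintype.card {x // π x = b} = Fintype.card γ) :
    Fintype.card {h : α → γ // FiberwiseBijective π h} =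
      (Fintype.card γ).factorial ^ Fintype.card β := by
  simp [Fintype.card_congr (fiberwiseBijectiveEquiv π γ), Fintype.card_pi,
    fun b => Fintype.card_equiv (Fintype.equivOfCardEq (hπ b)), hπ]

theorem card_fiberwiseBijective_apply_eq
    (hπ : ∀ b, Fintype.card {x // π x = b} = Fintype.card γ) (x₀ : α) (c : γ) :
    Fintype.card {h : α → γ // FiberwiseBijective π h ∧ h x₀ = c} =
      (Fintype.card γ - 1).factorial * (Fintype.card γ).factorial ^ (Fintype.card β - 1) := by
  have e : {h : α → γ // FiberwiseBijective π h ∧ h x₀ = c} ≃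
      {e : {x // π x = π x₀} ≃ γ // e ⟨x₀, rfl⟩ = c} ×
        ∀ b : {b // b ≠ π x₀}, {x // π x = b} ≃ γ :=
    (Equiv.subtypeSubtypeEquivSubtypeInter _ _).symm.trans <|
      (Equiv.subtypeEquiv ((fiberwiseBijectiveEquiv π γ).trans (Equiv.piSplitAt (π x₀) _))
        fun _ => Iff.rfl).trans
          (Equiv.prodSubtypeFstEquivSubtypeProd (p := fun e => e ⟨x₀, rfl⟩ = c))
  rw [Fintype.card_congr e, Fintype.card_prod, Fintype.card_subtype_equiv_apply_eq (hπ _),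
    Fintype.card_pi]
  simp [fun b => Fintype.card_equiv (Fintype.equivOfCardEq (hπ b)), hπ,
    Fintype.card_subtype_compl]

end Fiberwise

section OrthogonalTrial

variable {p d : ℕ}

/-- `S i f` is the `i`-th second component of the row whose first components are `f`. -/
abbrev LatinFamily (p d : ℕ) :=
  {S : Fin d → (Fin d → Fin p) → Fin (p ^ (d - 1)) // ∀ i, FiberwiseBijective (· i) (S i)}

namespace LatinFamily

def row (S : LatinFamily p d) (f : Fin d → Fin p) : OPoint p d := fun i => (f i, S.1 i f)

def toTrial (S : LatinFamily p d) : OT p d :=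
  ⟨⟨univ.val.map S.row, by simp⟩,
    fun i => (Multiset.map_map _ _ _).trans <|
      Multiset.map_univ_val_eq_univ_val_iff.mpr (bijective_prodMk_iff.mpr (S.2 i)),
    (Multiset.map_map _ _ _).trans (Multiset.map_id' _)⟩

theorem mem_toTrial {S : LatinFamily p d} {a : OPoint p d} :
    a ∈ (S.toTrial.1 : Multiset (OPoint p d)) ↔ ∀ i, S.1 i (fun j => (a j).1) = (a i).2 := by
  refine ⟨fun hmem => ?_, fun h => Multiset.mem_map.mpr
    ⟨fun j => (a j).1, mem_univ _, funext fun i => Prod.ext rfl (h i)⟩⟩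
  obtain ⟨f, -, rfl⟩ := Multiset.mem_map.mp hmem
  exact fun i => rfl

theorem toTrial_bijective : Bijective (toTrial (p := p) (d := d)) := by
  refine ⟨fun S S' h => Subtype.ext (funext fun i => funext fun f => ?_), fun H => ?_⟩
  · have hrow : S.row f ∈ (S'.toTrial.1 : Multiset (OPoint p d)) :=
      h ▸ mem_toTrial.mpr fun _ => rfl
    exact (mem_toTrial.mp hrow i).symm
  · obtain ⟨g, hg, hH⟩ := Multiset.exists_eq_map_univ_val_of_map_eq H.2.2
    have hrow f i : (f i, (g f i).2) = g f i := Prod.ext (congrFun (hg f) i).symm rfl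
    have hlatin i : Bijective fun f => g f i := by
      rw [← Multiset.map_univ_val_eq_univ_val_iff, ← H.2.1 i, hH, Multiset.map_map]
      rfl
    refine ⟨⟨fun i f => (g f i).2, fun i => bijective_prodMk_iff.mp ?_⟩, ?_⟩
    · simpa only [hrow] using hlatin i
    · refine Subtype.ext (Sym.coe_injective (hH.trans ?_).symm)
      show _ = Multiset.map (fun f i => (f i, (g f i).2)) _
      simp only [hrow]

noncomputable def trialEquiv : LatinFamily p d ≃ OT p d := Equiv.ofBijective _ toTrial_bijective

end LatinFamily

theorem card_OPoint : Fintype.card (OPoint p d) = p ^ (d ^ 2) := by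
  rcases d with _ | d
  · simp
  · simp [← pow_succ', ← pow_mul, sq]

theorem card_fiber (i : Fin d) (v : Fin p) :
    Fintype.card {f : Fin d → Fin p // f i = v} = Fintype.card (Fin (p ^ (d - 1))) := by
  simp [Fintype.card_subtype_apply_eq]

theorem card_OT : Fintype.card (OT p d) = (p ^ (d - 1)).factorial ^ (d * p) := by
  rw [← Fintype.card_congr LatinFamily.trialEquiv,
    Fintype.card_congr Equiv.subtypePiEquivPi, Fintype.card_pi]
  simp [card_fiberwiseBijective (card_fiber _), pow_mul']

theorem card_filter_mem_OT (a : OPoint p d) :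
    #{H : OT p d | a ∈ (H.1 : Multiset (OPoint p d))} =
      ((p ^ (d - 1) - 1).factorial * (p ^ (d - 1)).factorial ^ (p - 1)) ^ d := by
  have e : {H : OT p d // a ∈ (H.1 : Multiset (OPoint p d))} ≃
      ∀ i, {h : (Fin d → Fin p) → Fin (p ^ (d - 1)) //
        FiberwiseBijective (· i) h ∧ h (fun j => (a j).1) = (a i).2} :=
    (Equiv.subtypeEquiv LatinFamily.trialEquiv fun _ => LatinFamily.mem_toTrial.symm).symm.trans <|
      (Equiv.subtypeSubtypeEquivSubtypeInter _ _).trans <|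
        (Equiv.subtypeEquivRight fun _ => forall_and.symm).trans
          (Equiv.subtypePiEquivPi (p := fun i h =>
            FiberwiseBijective (· i) h ∧ h (fun j => (a j).1) = (a i).2))
  rw [← Fintype.card_subtype, Fintype.card_congr e, Fintype.card_pi]
  simp [card_fiberwiseBijective_apply_eq (card_fiber _)]

theorem factorial_pred_mul_pow_factorial_pow (hp : 1 ≤ p) :
    ((p ^ (d - 1) - 1).factorial * (p ^ (d - 1)).factorial ^ (p - 1)) ^ d =
      p ^ (d * (d - 1) * (p - 1)) * (p ^ (d - 1) - 1).factorial ^ (d * p) := by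
  obtain ⟨q, rfl⟩ : ∃ q, p = q + 1 := ⟨p - 1, by omega⟩
  rw [← Nat.mul_factorial_pred (pow_pos hp _).ne']
  simp only [Nat.add_sub_cancel]
  ring

end OrthogonalTrial

theorem expected_intersection_orthogonal_general (p d m : ℕ) (hp : 1 ≤ p) :
    (∑ M : Sym (OT p d) m,
        ((Finset.univ.filter (fun a : OPoint p d =>
          ∀ H ∈ (M : Multiset (OT p d)),
            a ∈ ((H : OT p d).1 : Multiset (OPoint p d)))).card : ℚ))
      / (Fintype.card (Sym (OT p d) m) : ℚ)
    = (p : ℚ) ^ (d ^ 2)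
        * ((p ^ (d * (d - 1) * (p - 1)) * (p ^ (d - 1) - 1).factorial ^ (d * p) + m - 1).choose m : ℚ)
        / (((p ^ (d - 1)).factorial ^ (d * p) + m - 1).choose m : ℚ) := by
  have hcount : ∑ M : Sym (OT p d) m,
      #{a : OPoint p d | ∀ H ∈ (M : Multiset (OT p d)), a ∈ (H.1 : Multiset _)} =
      p ^ (d ^ 2) * Nat.multichoose
        (((p ^ (d - 1) - 1).factorial * (p ^ (d - 1)).factorial ^ (p - 1)) ^ d) m :=
    calc _ = ∑ a : OPoint p d,
          #{M : Sym (OT p d) m | ∀ H ∈ (M : Multiset (OT p d)), a ∈ (H.1 : Multiset _)} :=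
          sum_card_bipartiteAbove_eq_sum_card_bipartiteBelow _
      _ = ∑ a : OPoint p d, Nat.multichoose #{H : OT p d | a ∈ (H.1 : Multiset _)} m := by
          simp_rw [← Sym.card_filter_forall_mem, mem_filter, mem_univ, true_and, Sym.mem_coe]
      _ = _ := by simp only [card_filter_mem_OT, sum_const, card_univ, card_OPoint, smul_eq_mul]
  rw [← Nat.cast_sum, hcount, Sym.card_sym_eq_multichoose, card_OT, Nat.multichoose_eq,
    Nat.multichoose_eq, factorial_pred_mul_pow_factorial_pow hp]
  push_cast
  ring

/-- the expected number of `d`-tuples common to all members of a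
uniformly random multiset of `m` Orthogonal `d`-trials on `[p] × [p^(d-1)]` equals
`p^(d²) · C(p^(d(d-1)(p-1)) ((p^(d-1)-1)!)^(dp) + m - 1, m) / C(((p^(d-1))!)^(dp) + m - 1, m)`. -/
theorem expected_intersection_orthogonal (p d m : ℕ) (hp : 1 ≤ p) (hd : 1 ≤ d) (hm : 1 ≤ m) :
    (∑ M : Sym (OT p d) m,
        ((Finset.univ.filter (fun a : OPoint p d =>
          ∀ H ∈ (M : Multiset (OT p d)),
            a ∈ ((H : OT p d).1 : Multiset (OPoint p d)))).card : ℚ))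
      / (Fintype.card (Sym (OT p d) m) : ℚ)
    = (p : ℚ) ^ (d ^ 2)
        * ((p ^ (d * (d - 1) * (p - 1)) * (p ^ (d - 1) - 1).factorial ^ (d * p) + m - 1).choose m : ℚ)
        / (((p ^ (d - 1)).factorial ^ (d * p) + m - 1).choose m : ℚ) :=
  expected_intersection_orthogonal_general p d m hp
end

section
/- Let n = p^d and fix i < j in [d] and p_i, p_j ∈ [p]. The expected number of (i,j)-edges lying in the sub-block E_{(p_i,p_j)} and common to all members of a uniformly random multiset of m Latin Hypercube d-trials on [p^d] equals p^(2d-2) · binomial(((p^d-1)!)^(d-1) · p^(d²-2d) + m - 1, m) / binomial((p^d!)^(d-1) + m - 1, m). -/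
/-- A Latin Hypercube `d`-trial on `[n]`: a multiset of `n` points of `[n]^d`
(encoded as `Sym (Fin d → Fin n) n`) whose projection onto each coordinate is
a permutation of `[n]`, i.e. equals the multiset `{1,…,n}`. -/
def IsLHTrial {n d : ℕ} (H : Sym (Fin d → Fin n) n) : Prop :=
  ∀ i : Fin d, (H : Multiset (Fin d → Fin n)).map (fun r => r i)
    = (Finset.univ : Finset (Fin n)).val

instance {n d : ℕ} : DecidablePred (IsLHTrial (n := n) (d := d)) := fun H => by
  unfold IsLHTrial; infer_instance

/-- The finset of all Latin Hypercube `d`-trials on `[n]`. -/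
def LHTrial (n d : ℕ) : Finset (Sym (Fin d → Fin n) n) :=
  Finset.univ.filter IsLHTrial

/-- The type of Latin Hypercube `d`-trials on `[n]`. -/
abbrev LHT (n d : ℕ) := {H : Sym (Fin d → Fin n) n // IsLHTrial H}

/-!
Fixing the `i`-th coordinate as the row index, a trial on `[n]` is the same as a tuple of `d`
permutations of `[n]` whose `i`-th entry is the identity. Hence there are `(n!)^(d-1)` trials,
and those containing the `(i,j)`-edge `(a, b)` are the tuples whose `j`-th permutation sends `a`
to `b`, of which there are `(n-1)! (n!)^(d-2)`. All members of a multiset of `m` trials contain the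
edge iff it is a multiset of such trials, so these multisets are counted by a multichoose number.
Double counting over the `p^(2d-2)` edges of the sub-block gives the numerator, and
`(n-1)! (n!)^(d-2) = ((n-1)!)^(d-1) p^(d²-2d)` for `n = p^d`.
-/

open Finset
open scoped Nat

section Counting

variable {ι M α : Type*} [CommMonoid M]

lemma Finset.prod_eq_pow_card_sub_one {s : Finset ι} {f : ι → M} {i : ι} {b : M} (hi : i ∈ s)
    (hfi : f i = 1) (hf : ∀ k ∈ s, k ≠ i → f k = b) : ∏ k ∈ s, f k = b ^ (#s - 1) := by
  classical
  rw [← mul_prod_erase s f hi, hfi, one_mul, ← card_erase_of_mem hi]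
  exact prod_eq_pow_card fun k hk => hf k (mem_of_mem_erase hk) (ne_of_mem_erase hk)

lemma Fintype.prod_eq_mul_pow_card_sub_two [Fintype ι] {f : ι → M} {i j : ι} {b : M}
    (hij : i ≠ j) (hfi : f i = 1) (hf : ∀ k, k ≠ i → k ≠ j → f k = b) :
    ∏ k, f k = f j * b ^ (Fintype.card ι - 2) := by
  classical
  rw [← mul_prod_erase univ f (mem_univ j),
    prod_eq_pow_card_sub_one (mem_erase.2 ⟨hij, mem_univ i⟩) hfi
      fun k hk hki => hf k hki (ne_of_mem_erase hk),
    card_erase_of_mem (mem_univ j), card_univ, Nat.sub_sub]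

variable [Fintype α] [DecidableEq α]

lemma Equiv.Perm.natCard_apply_eq (a b : α) :
    Nat.card {π : Equiv.Perm α // π a = b} = (Fintype.card α - 1)! := by
  have toFix :
      {π : Equiv.Perm α // π a = b} ≃ {π : Equiv.Perm α // ∀ x, ¬x ≠ a → π x = x} :=
    { toFun π := ⟨Equiv.swap a b * π, by simp [π.2]⟩
      invFun π := ⟨Equiv.swap a b * π, by simp [π.2 a (not_not.2 rfl)]⟩
      left_inv π := by ext1; simp [← mul_assoc]
      right_inv π := by ext1; simp [← mul_assoc] }
  rw [Nat.card_congr (toFix.trans (Equiv.Perm.subtypeEquivSubtypePerm _).symm),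
    Nat.card_eq_fintype_card, Fintype.card_perm, Fintype.card_subtype_compl,
    Fintype.card_subtype_eq]

variable [Fintype ι]

lemma natCard_perms_eq_one (i : ι) :
    Nat.card {σ : ι → Equiv.Perm α // σ i = 1}
      = (Fintype.card α)! ^ (Fintype.card ι - 1) := by
  let P (k : ι) (π : Equiv.Perm α) : Prop := k = i → π = 1
  rw [Nat.card_congr ((Equiv.subtypeEquivRight fun σ =>
      ⟨fun h k hk => hk ▸ h, fun h => h i rfl⟩).trans (Equiv.subtypePiEquivPi (p := P))),
    Nat.card_pi]
  refine prod_eq_pow_card_sub_one (mem_univ i) ?_ fun k _ hki => ?_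
  · simp [P]
  · simp [P, hki, Nat.card_eq_fintype_card, Fintype.card_perm]

lemma natCard_perms_eq_one_apply_eq {i j : ι} (hij : i ≠ j) (a b : α) :
    Nat.card {σ : ι → Equiv.Perm α // σ i = 1 ∧ σ j a = b}
      = (Fintype.card α - 1)! * (Fintype.card α)! ^ (Fintype.card ι - 2) := by
  let P (k : ι) (π : Equiv.Perm α) : Prop := (k = i → π = 1) ∧ (k = j → π a = b)
  rw [Nat.card_congr ((Equiv.subtypeEquivRight fun σ =>
      ⟨fun h k => ⟨fun hk => hk ▸ h.1, fun hk => hk ▸ h.2⟩,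
        fun h => ⟨(h i).1 rfl, (h j).2 rfl⟩⟩).trans (Equiv.subtypePiEquivPi (p := P))),
    Nat.card_pi,
    Fintype.prod_eq_mul_pow_card_sub_two (b := (Fintype.card α)!) hij (by simp [P, hij])
      fun k hki hkj => by simp [P, hki, hkj, Nat.card_eq_fintype_card, Fintype.card_perm],
    ← Equiv.Perm.natCard_apply_eq a b]
  exact congrArg (· * _) (Nat.card_congr (Equiv.subtypeEquivRight fun π => by simp [P, hij.symm]))

end Counting

namespace LatinHypercube

variable {n d : ℕ}

def ofPerms (σ : Fin d → Equiv.Perm (Fin n)) : LHT n d :=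
  ⟨⟨univ.val.map fun v k => σ k v, by rw [Multiset.card_map, card_val, card_fin]⟩,
    fun k => by
    show ((univ.val.map fun v k => σ k v).map fun r => r k) = univ.val
    rw [Multiset.map_map]
    exact Multiset.map_univ_val_equiv (σ k)⟩

lemma mem_ofPerms {σ : Fin d → Equiv.Perm (Fin n)} {r : Fin d → Fin n} :
    r ∈ ((ofPerms σ).1 : Multiset (Fin d → Fin n)) ↔ ∃ v, (fun k => σ k v) = r := by
  simp [ofPerms]

lemma exists_mem_apply_eq (H : LHT n d) (k : Fin d) (v : Fin n) :
    ∃ r ∈ (H.1 : Multiset (Fin d → Fin n)), r k = v := by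
  have hv : v ∈ (H.1 : Multiset (Fin d → Fin n)).map (· k) := by simp [H.2 k]
  simpa using hv

lemma ofPerms_injOn (i : Fin d) : Set.InjOn (ofPerms (n := n)) {σ | σ i = 1} := by
  intro σ hσ τ hτ h
  funext k
  ext v
  obtain ⟨w, hw⟩ := mem_ofPerms.1 (h ▸ mem_ofPerms.2 ⟨v, rfl⟩ :
    (fun k => σ k v) ∈ ((ofPerms τ).1 : Multiset (Fin d → Fin n)))
  have hwv : w = v := by simpa [show σ i = 1 from hσ, show τ i = 1 from hτ] using congrFun hw i
  rw [← congrFun hw k, hwv]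

lemma exists_ofPerms_eq (H : LHT n d) (i : Fin d) : ∃ σ, σ i = 1 ∧ ofPerms σ = H := by
  choose f hfH hfi using exists_mem_apply_eq H i
  have hH : (H.1 : Multiset (Fin d → Fin n)) = univ.val.map f := by
    have hf : Function.Injective f := fun v w h => by rw [← hfi v, ← hfi w, h]
    refine (Multiset.eq_of_le_of_card_le ?_ (by simp)).symm
    exact (Multiset.le_iff_subset (univ.nodup.map hf)).2 fun r hr => by
      obtain ⟨v, -, rfl⟩ := Multiset.mem_map.1 hr
      exact hfH v
  have hbij (k : Fin d) : Function.Bijective fun v => f v k := by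
    have hk := H.2 k
    rw [hH, Multiset.map_map] at hk
    exact (Multiset.bijective_iff_map_univ_eq_univ _).2 hk
  refine ⟨fun k => Equiv.ofBijective _ (hbij k), Equiv.ext hfi, ?_⟩
  apply Subtype.ext
  apply Sym.coe_injective
  exact hH.symm

noncomputable def equivPerms (i : Fin d) :
    {σ : Fin d → Equiv.Perm (Fin n) // σ i = 1} ≃ LHT n d :=
  Equiv.ofBijective (fun σ => ofPerms σ.1)
    ⟨fun σ τ h => Subtype.ext (ofPerms_injOn i σ.2 τ.2 h), fun H => by
      obtain ⟨σ, hσ, rfl⟩ := exists_ofPerms_eq H i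
      exact ⟨⟨σ, hσ⟩, rfl⟩⟩

lemma natCard_LHT (i : Fin d) : Nat.card (LHT n d) = n ! ^ (d - 1) := by
  rw [← Nat.card_congr (equivPerms i), natCard_perms_eq_one i, Fintype.card_fin, Fintype.card_fin]

def HasEdge (i j : Fin d) (a b : Fin n) (H : LHT n d) : Prop :=
  ∃ r ∈ (H.1 : Multiset (Fin d → Fin n)), r i = a ∧ r j = b

lemma hasEdge_ofPerms_iff {i j : Fin d} {a b : Fin n} {σ : Fin d → Equiv.Perm (Fin n)}
    (hσ : σ i = 1) : HasEdge i j a b (ofPerms σ) ↔ σ j a = b := by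
  simp only [HasEdge, mem_ofPerms]
  constructor
  · rintro ⟨-, ⟨v, rfl⟩, hv, rfl⟩
    simp only [hσ, Equiv.Perm.coe_one, id_eq] at hv
    rw [hv]
  · intro h
    exact ⟨_, ⟨a, rfl⟩, by simp [hσ], h⟩

lemma natCard_hasEdge {i j : Fin d} (hij : i ≠ j) (a b : Fin n) :
    Nat.card {H : LHT n d // HasEdge i j a b H} = (n - 1)! * n ! ^ (d - 2) := by
  rw [← Nat.card_congr ((equivPerms i).subtypeEquiv fun σ => (hasEdge_ofPerms_iff σ.2).symm),
    Nat.card_congr (Equiv.subtypeSubtypeEquivSubtypeInter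
      (fun σ : Fin d → Equiv.Perm (Fin n) => σ i = 1) fun σ => σ j a = b),
    natCard_perms_eq_one_apply_eq hij a b, Fintype.card_fin, Fintype.card_fin]

end LatinHypercube

lemma Sym.card_filter_forall_mem_s10 {α : Type*} [Fintype α] [DecidableEq α] (P : α → Prop)
    [DecidablePred P] (m : ℕ) :
    #{M : Sym α m | ∀ x ∈ (M : Multiset α), P x}
      = (Nat.card {x // P x} + m - 1).choose m := by
  have h : ({M : Sym α m | ∀ x ∈ (M : Multiset α), P x} : Finset (Sym α m))
      = (univ.map (Function.Embedding.subtype P)).sym m := by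
    ext M
    simp [univ_map_subtype, mem_sym_iff]
  rw [h, sym_map, card_map, sym_univ, card_univ, Sym.card_sym_eq_choose, Nat.card_eq_fintype_card]

lemma Nat.factorial_pred_mul_factorial_pow {n : ℕ} (hn : n ≠ 0) (k : ℕ) :
    (n - 1)! * n ! ^ k = (n - 1)! ^ (k + 1) * n ^ k := by
  rw [← Nat.mul_factorial_pred hn, mul_pow, pow_succ]
  ring

lemma Finset.sum_card_filter_comm {α β : Type*} [Fintype α] [Fintype β] (r : α → β → Prop)
    [∀ a b, Decidable (r a b)] : ∑ a, #{b | r a b} = ∑ b, #{a | r a b} :=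
  sum_card_bipartiteAbove_eq_sum_card_bipartiteBelow r

theorem expected_subblock_edge_intersection_general (p d m : ℕ)
    (i j : Fin d) (hij : i < j) (pi pj : Fin p) :
    (∑ M : Sym (LHT (p ^ d) d) m,
        ((Finset.univ.filter (fun e : Fin (p ^ (d - 1)) × Fin (p ^ (d - 1)) =>
          ∀ H ∈ (M : Multiset (LHT (p ^ d) d)),
            ∃ r ∈ ((H : LHT (p ^ d) d).1 : Multiset (Fin d → Fin (p ^ d))),
              (r i : ℕ) = pi * p ^ (d - 1) + e.1 ∧
              (r j : ℕ) = pj * p ^ (d - 1) + e.2)).card : ℚ))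
      / (Fintype.card (Sym (LHT (p ^ d) d) m) : ℚ)
    = (p : ℚ) ^ (2 * d - 2)
        * (((p ^ d - 1).factorial ^ (d - 1) * p ^ (d ^ 2 - 2 * d) + m - 1).choose m : ℚ)
        / (((p ^ d).factorial ^ (d - 1) + m - 1).choose m : ℚ) := by
  classical
  have hd : 2 ≤ d := by omega
  have hpow : p * p ^ (d - 1) = p ^ d := by rw [← pow_succ', Nat.sub_add_cancel i.pos]
  let block (u : Fin p) (x : Fin (p ^ (d - 1))) : Fin (p ^ d) :=
    Fin.cast hpow (finProdFinEquiv (u, x))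
  have hblock (u : Fin p) (x : Fin (p ^ (d - 1))) (y : Fin (p ^ d)) :
      (y : ℕ) = u * p ^ (d - 1) + x ↔ y = block u x := by
    simp [block, Fin.ext_iff, add_comm, mul_comm]
  have hcount (e : Fin (p ^ (d - 1)) × Fin (p ^ (d - 1))) :
      #{M : Sym (LHT (p ^ d) d) m | ∀ H ∈ (M : Multiset (LHT (p ^ d) d)),
        ∃ r ∈ (H.1 : Multiset (Fin d → Fin (p ^ d))),
          (r i : ℕ) = pi * p ^ (d - 1) + e.1 ∧ (r j : ℕ) = pj * p ^ (d - 1) + e.2}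
      = ((p ^ d - 1)! * (p ^ d)! ^ (d - 2) + m - 1).choose m := by
    simp only [hblock]
    rw [Sym.card_filter_forall_mem_s10, ← LatinHypercube.natCard_hasEdge hij.ne]
    rfl
  have hden : Fintype.card (Sym (LHT (p ^ d) d) m) = ((p ^ d)! ^ (d - 1) + m - 1).choose m := by
    rw [Sym.card_sym_eq_choose, ← Nat.card_eq_fintype_card, LatinHypercube.natCard_LHT i]
  have harith :
      (p ^ d - 1)! * (p ^ d)! ^ (d - 2) = (p ^ d - 1)! ^ (d - 1) * p ^ (d ^ 2 - 2 * d) := by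
    rw [Nat.factorial_pred_mul_factorial_pow (pow_ne_zero d pi.pos.ne'), ← pow_mul]
    congr 2
    · omega
    · rw [Nat.mul_sub, sq, mul_comm d 2]
  rw [← Nat.cast_sum, sum_card_filter_comm, sum_congr rfl fun e _ => by convert hcount e,
    sum_const, card_univ, Fintype.card_prod, Fintype.card_fin, smul_eq_mul, ← pow_add,
    show d - 1 + (d - 1) = 2 * d - 2 by omega, hden, harith]
  push_cast
  ring

/-- let `n = p^d`, fix `i < j` and `p_i, p_j ∈ [p]`. Identifying a value
`(u,x) ∈ [p] × [p^(d-1)]` with `u·p^(d-1) + x` (zero-indexed), the expected number of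
`(i,j)`-edges lying in the sub-block `E_{(p_i,p_j)} = {((p_i,x_i),(p_j,x_j))}` and common
to all members of a uniformly random multiset of `m` Latin Hypercube `d`-trials on `[p^d]`
equals `p^(2d-2) · C(((p^d-1)!)^(d-1)·p^(d²-2d)+m-1, m) / C(((p^d)!)^(d-1)+m-1, m)`. -/
theorem expected_subblock_edge_intersection (p d m : ℕ) (hp : 1 ≤ p) (hm : 1 ≤ m)
    (i j : Fin d) (hij : i < j) (pi pj : Fin p) :
    (∑ M : Sym (LHT (p ^ d) d) m,
        ((Finset.univ.filter (fun e : Fin (p ^ (d - 1)) × Fin (p ^ (d - 1)) =>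
          ∀ H ∈ (M : Multiset (LHT (p ^ d) d)),
            ∃ r ∈ ((H : LHT (p ^ d) d).1 : Multiset (Fin d → Fin (p ^ d))),
              (r i : ℕ) = pi * p ^ (d - 1) + e.1 ∧
              (r j : ℕ) = pj * p ^ (d - 1) + e.2)).card : ℚ))
      / (Fintype.card (Sym (LHT (p ^ d) d) m) : ℚ)
    = (p : ℚ) ^ (2 * d - 2)
        * (((p ^ d - 1).factorial ^ (d - 1) * p ^ (d ^ 2 - 2 * d) + m - 1).choose m : ℚ)
        / (((p ^ d).factorial ^ (d - 1) + m - 1).choose m : ℚ) :=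
  expected_subblock_edge_intersection_general p d m i j hij pi pj
end

section
/- For 0 < a ≤ b and integers 1 ≤ m ≤ k with t = k(k-1)/a ≤ 1, one has 0 ≤ ∏_{i=0}^{m-1} (a+i)/(b+i) − (a/b)^m ≤ (a/b)^m · (exp(k(k-1)/(2a)) − 1) ≤ (a/b)^m · k(k-1)/a. -/
/-!
Each factor satisfies `a / b ≤ (a + i) / (b + i) ≤ (a + i) / b = (a / b) (1 + i / a) ≤ (a / b) e^{i / a}`,
so the product lies between `(a / b)^m` and `(a / b)^m e^{m(m-1)/(2a)}`, and `m(m-1) ≤ k(k-1)`.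
Finally `e^{t/2} ≤ 2 / (2 - t) ≤ 1 + t` on `[0, 1]`, the last step being `t² ≤ t`.
-/

open Real Finset

lemma sum_range_natCast (m : ℕ) : ∑ i ∈ range m, (i : ℝ) = m * (m - 1) / 2 := by
  induction m with
  | zero => simp
  | succ n ih => rw [sum_range_succ, ih]; push_cast; ring

lemma natCast_mul_sub_one_le {m k : ℕ} (hmk : m ≤ k) : (m : ℝ) * (m - 1) ≤ k * (k - 1) := by
  have h := sum_le_sum_of_subset_of_nonneg (range_mono hmk)
    fun i _ _ ↦ (Nat.cast_nonneg i : (0 : ℝ) ≤ i)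
  rw [sum_range_natCast, sum_range_natCast] at h
  linarith

lemma div_le_add_div_add {a b c : ℝ} (hb : 0 < b) (hab : a ≤ b) (hc : 0 ≤ c) :
    a / b ≤ (a + c) / (b + c) := by
  rw [div_le_div_iff₀ hb (by linarith)]
  nlinarith

lemma add_div_add_le_mul_exp {a b c : ℝ} (ha : 0 < a) (hb : 0 < b) (hc : 0 ≤ c) :
    (a + c) / (b + c) ≤ a / b * exp (c / a) :=
  calc (a + c) / (b + c) ≤ (a + c) / b := div_le_div_of_nonneg_left (by linarith) hb (by linarith)
    _ = a / b * (c / a + 1) := by field_simp; ring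
    _ ≤ a / b * exp (c / a) := by gcongr; exact add_one_le_exp _

section ratioProduct

variable {a b : ℝ}

lemma pow_div_le_prod_range_add_div_add (ha : 0 < a) (hab : a ≤ b) (m : ℕ) :
    (a / b) ^ m ≤ ∏ i ∈ range m, (a + i) / (b + i) := by
  have hb : 0 < b := ha.trans_le hab
  rw [pow_eq_prod_const]
  exact prod_le_prod (fun _ _ ↦ by positivity)
    fun i _ ↦ div_le_add_div_add hb hab (Nat.cast_nonneg i)

lemma prod_range_add_div_add_le (ha : 0 < a) (hb : 0 < b) (m : ℕ) :
    ∏ i ∈ range m, (a + i) / (b + i) ≤ (a / b) ^ m * exp (m * (m - 1) / (2 * a)) :=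
  calc ∏ i ∈ range m, (a + i) / (b + i) ≤ ∏ i ∈ range m, a / b * exp (i / a) :=
        prod_le_prod (fun _ _ ↦ by positivity)
          fun i _ ↦ add_div_add_le_mul_exp ha hb (Nat.cast_nonneg i)
    _ = (a / b) ^ m * exp (m * (m - 1) / (2 * a)) := by
        rw [prod_mul_distrib, prod_const, card_range, ← exp_sum, ← sum_div, sum_range_natCast]
        ring_nf

end ratioProduct

lemma exp_half_sub_one_le {t : ℝ} (h0 : 0 ≤ t) (h1 : t ≤ 1) : exp (t / 2) - 1 ≤ t := by
  have hexp : exp (t / 2) ≤ 1 / (1 - t / 2) :=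
    exp_bound_div_one_sub_of_interval (by linarith) (by linarith)
  have hbound : 1 / (1 - t / 2) ≤ 1 + t := by
    rw [div_le_iff₀ (by linarith)]
    nlinarith
  linarith

theorem product_ratio_error_bounds_general (a b : ℝ) (ha : 0 < a) (hab : a ≤ b)
    (m k : ℕ) (hmk : m ≤ k) (ht : (k : ℝ) * (k - 1) / a ≤ 1) :
    0 ≤ ∏ i ∈ Finset.range m, (a + i) / (b + i) - (a / b) ^ m ∧
    ∏ i ∈ Finset.range m, (a + i) / (b + i) - (a / b) ^ m
      ≤ (a / b) ^ m * (Real.exp (k * (k - 1) / (2 * a)) - 1) ∧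
    (a / b) ^ m * (Real.exp (k * (k - 1) / (2 * a)) - 1)
      ≤ (a / b) ^ m * (k * (k - 1) / a) := by
  have hb : 0 < b := ha.trans_le hab
  have hpow : 0 ≤ (a / b) ^ m := by positivity
  have hexp : exp (m * (m - 1) / (2 * a)) ≤ exp (k * (k - 1) / (2 * a)) :=
    exp_le_exp.mpr (div_le_div_of_nonneg_right (natCast_mul_sub_one_le hmk) (by positivity))
  have hupper := prod_range_add_div_add_le ha hb m
  have ht0 : 0 ≤ (k : ℝ) * (k - 1) / a :=
    div_nonneg ((natCast_mul_sub_one_le k.zero_le).trans' (by simp)) ha.le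
  have hhalf : (k : ℝ) * (k - 1) / (2 * a) = k * (k - 1) / a / 2 := by ring
  refine ⟨sub_nonneg.mpr (pow_div_le_prod_range_add_div_add ha hab m), ?_, ?_⟩
  · linarith [mul_le_mul_of_nonneg_left hexp hpow]
  · rw [hhalf]
    exact mul_le_mul_of_nonneg_left (exp_half_sub_one_le ht0 ht) hpow

/-- for `0 < a ≤ b` and integers `1 ≤ m ≤ k` with `k(k-1)/a ≤ 1`,
`0 ≤ ∏_{i=0}^{m-1} (a+i)/(b+i) − (a/b)^m ≤ (a/b)^m·(exp(k(k-1)/(2a)) − 1) ≤ (a/b)^m·k(k-1)/a`. -/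
theorem product_ratio_error_bounds (a b : ℝ) (ha : 0 < a) (hab : a ≤ b)
    (m k : ℕ) (hm : 1 ≤ m) (hmk : m ≤ k) (ht : (k : ℝ) * (k - 1) / a ≤ 1) :
    0 ≤ ∏ i ∈ Finset.range m, (a + i) / (b + i) - (a / b) ^ m ∧
    ∏ i ∈ Finset.range m, (a + i) / (b + i) - (a / b) ^ m
      ≤ (a / b) ^ m * (Real.exp (k * (k - 1) / (2 * a)) - 1) ∧
    (a / b) ^ m * (Real.exp (k * (k - 1) / (2 * a)) - 1)
      ≤ (a / b) ^ m * (k * (k - 1) / a) :=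
  product_ratio_error_bounds_general a b ha hab m k hmk ht
end
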